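/- arXiv:1703.02814 — 2 statements merged into one kernel-verified Lean document; each statement's English description precedes it below -/
import Mathlib

section
/- Let A ⊆ ℝⁿ be Lebesgue-measurable. Then every point x ∈ A \ cessco(A) has Lebesgue density 0 with respect to A, i.e. lim_{ε→0} m(A ∩ B_ε(x))/m(B_ε(x)) = 0. In particular, the measure-theoretic interior A° is contained in cessco(A), and m(A \ cessco(A)) = 0. -/
open MeasureTheory Filter Set
open scoped RealInnerProductSpace Topology

noncomputable section

/-- The closed half-space `H_{ρ,t} = {x ∈ ℝⁿ : x·ρ ≤ t}`. -/
def halfSpace {n : ℕ} (ρ : EuclideanSpace ℝ (Fin n)) (t : ℝ) :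
    Set (EuclideanSpace ℝ (Fin n)) :=
  {x | ⟪x, ρ⟫ ≤ t}

/-- The closed essential convex hull of a set `A ⊆ ℝⁿ`: the intersection of all closed
half-spaces `H_{ρ,t}` such that `m(A \ H_{ρ,t}) = 0`. -/
def cessco {n : ℕ} (A : Set (EuclideanSpace ℝ (Fin n))) :
    Set (EuclideanSpace ℝ (Fin n)) :=
  ⋂ ρ : EuclideanSpace ℝ (Fin n), ⋂ t : ℝ,
    ⋂ _ : volume (A \ halfSpace ρ t) = 0, halfSpace ρ t

/-- The measure-theoretic interior of `A`: the set of points of `A` at which `A` has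
Lebesgue density `1`. -/
def mtInterior {n : ℕ} (A : Set (EuclideanSpace ℝ (Fin n))) :
    Set (EuclideanSpace ℝ (Fin n)) :=
  {x ∈ A | Tendsto (fun ε : ℝ => volume (A ∩ Metric.ball x ε) / volume (Metric.ball x ε))
      (𝓝[>] 0) (𝓝 1)}

/-- If `A` is a.e. inside a half-space and `x` is strictly outside it, then small closed balls
around `x` meet `A` only in a null set. -/
lemma eventually_volume_inter_closedBall_zero {n : ℕ} {A : Set (EuclideanSpace ℝ (Fin n))}
    {ρ : EuclideanSpace ℝ (Fin n)} {t : ℝ} (h0 : volume (A \ halfSpace ρ t) = 0)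
    {x : EuclideanSpace ℝ (Fin n)} (hx : t < ⟪x, ρ⟫) :
    ∀ᶠ ε in 𝓝[>] (0 : ℝ), volume (A ∩ Metric.closedBall x ε) = 0 := by
  rcases eq_or_ne ρ 0 with rfl | hρ
  · have hA0 : volume A = 0 := by
      have : A \ halfSpace (0 : EuclideanSpace ℝ (Fin n)) t = A := by
        ext y
        simp [halfSpace, inner_zero_right, not_le.mpr (by simpa [inner_zero_right] using hx)]
      rwa [this] at h0
    exact Filter.Eventually.of_forall fun ε =>
      measure_mono_null Set.inter_subset_left hA0
  · set ε0 : ℝ := (⟪x, ρ⟫ - t) / ‖ρ‖ with hε0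
    have hρpos : (0 : ℝ) < ‖ρ‖ := norm_pos_iff.mpr hρ
    have hε0pos : 0 < ε0 := div_pos (by linarith) hρpos
    have h1 : ∀ ε ∈ Set.Ioo (0 : ℝ) ε0, volume (A ∩ Metric.closedBall x ε) = 0 := by
      intro ε hε
      refine measure_mono_null ?_ h0
      rintro y ⟨hyA, hyB⟩
      refine ⟨hyA, ?_⟩
      simp only [halfSpace, Set.mem_setOf_eq, not_le]
      have hdist : ‖x - y‖ ≤ ε := by
        rw [← dist_eq_norm]
        simpa [dist_comm] using hyB
      have : ⟪x - y, ρ⟫ ≤ ‖x - y‖ * ‖ρ‖ := real_inner_le_norm _ _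
      have h2 : ⟪x, ρ⟫ - ⟪y, ρ⟫ ≤ ε * ‖ρ‖ := by
        have := inner_sub_left (𝕜 := ℝ) x y ρ
        nlinarith [mul_le_mul_of_nonneg_right hdist (le_of_lt hρpos)]
      have h3 : ε * ‖ρ‖ < ε0 * ‖ρ‖ :=
        mul_lt_mul_of_pos_right hε.2 hρpos
      have h4 : ε0 * ‖ρ‖ = ⟪x, ρ⟫ - t := by
        rw [hε0, div_mul_cancel₀ _ hρpos.ne']
      linarith
    filter_upwards [Ioo_mem_nhdsGT_of_mem ⟨le_refl (0 : ℝ), hε0pos⟩] with ε hε using h1 ε hε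

/-- Every point of `A \ cessco A` has Lebesgue density `0` with respect to `A`; in
particular the measure-theoretic interior of `A` is contained in `cessco A`, and
`m(A \ cessco A) = 0`. -/
theorem density_zero_outside_cessco {n : ℕ} (A : Set (EuclideanSpace ℝ (Fin n)))
    (hA : MeasurableSet A) :
    (∀ x ∈ A \ cessco A,
      Tendsto (fun ε : ℝ => volume (A ∩ Metric.ball x ε) / volume (Metric.ball x ε))
        (𝓝[>] 0) (𝓝 0)) ∧
    mtInterior A ⊆ cessco A ∧
    volume (A \ cessco A) = 0 := by
  -- From `x ∉ cessco A`, extract a witnessing half-space.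
  have hwit : ∀ x : EuclideanSpace ℝ (Fin n), x ∉ cessco A →
      ∃ ρ t, volume (A \ halfSpace ρ t) = 0 ∧ t < ⟪x, ρ⟫ := by
    intro x hx
    simp only [cessco, Set.mem_iInter, not_forall] at hx
    obtain ⟨ρ, t, h0, hxt⟩ := hx
    exact ⟨ρ, t, h0, not_le.mp hxt⟩
  have key : ∀ x : EuclideanSpace ℝ (Fin n), x ∉ cessco A →
      ∀ᶠ ε in 𝓝[>] (0 : ℝ), volume (A ∩ Metric.closedBall x ε) = 0 := by
    intro x hx
    obtain ⟨ρ, t, h0, hxt⟩ := hwit x hx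
    exact eventually_volume_inter_closedBall_zero h0 hxt
  have part1 : ∀ x ∈ A \ cessco A,
      Tendsto (fun ε : ℝ => volume (A ∩ Metric.ball x ε) / volume (Metric.ball x ε))
        (𝓝[>] 0) (𝓝 0) := by
    rintro x ⟨-, hx⟩
    have : ∀ᶠ ε in 𝓝[>] (0 : ℝ),
        volume (A ∩ Metric.ball x ε) / volume (Metric.ball x ε) = 0 := by
      filter_upwards [key x hx] with ε hε
      have : volume (A ∩ Metric.ball x ε) = 0 :=
        measure_mono_null (Set.inter_subset_inter_right _ Metric.ball_subset_closedBall) hε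
      simp [this]
    exact Tendsto.congr' (this.mono fun ε h => h.symm) tendsto_const_nhds
  have partCB : ∀ x : EuclideanSpace ℝ (Fin n), x ∉ cessco A →
      Tendsto (fun ε : ℝ =>
          volume (A ∩ Metric.closedBall x ε) / volume (Metric.closedBall x ε))
        (𝓝[>] 0) (𝓝 0) := by
    intro x hx
    have : ∀ᶠ ε in 𝓝[>] (0 : ℝ),
        volume (A ∩ Metric.closedBall x ε) / volume (Metric.closedBall x ε) = 0 := by
      filter_upwards [key x hx] with ε hε
      simp [hε]
    exact Tendsto.congr' (this.mono fun ε h => h.symm) tendsto_const_nhds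
  refine ⟨part1, ?_, ?_⟩
  · intro x hx
    by_contra hxc
    have h0 := part1 x ⟨hx.1, hxc⟩
    have h1 := hx.2
    exact zero_ne_one (tendsto_nhds_unique h0 h1)
  · have hae := Besicovitch.ae_tendsto_measure_inter_div (volume :
      Measure (EuclideanSpace ℝ (Fin n))) A
    have hmem : ∀ᵐ x ∂(volume.restrict A), x ∈ cessco A := by
      filter_upwards [hae] with x hx1
      by_contra hxc
      exact zero_ne_one (tendsto_nhds_unique (partCB x hxc) hx1)
    have : (volume.restrict A) {x | x ∉ cessco A} = 0 := hmem
    rw [Measure.restrict_apply' hA] at this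
    have heq : {x | x ∉ cessco A} ∩ A = A \ cessco A := by
      ext y; simp [Set.mem_diff, and_comm]
    rwa [heq] at this
end
end

section
/- Let B ⊆ ℝⁿ be a Lebesgue-measurable set with m(B) > 0 and let D ⊆ ℝⁿ be a closed set with B ∩ D = ∅. Then there exist a point x ∈ B and r > 0 such that the set B' = B ∩ B(x, r) satisfies m(B') > 0 and cessco(B') ∩ D = ∅, where B(x, r) is the open ball of radius r around x. -/
/-!
Some point `x ∈ B` has `m(B ∩ U) > 0` for every neighbourhood `U` of `x` (otherwise `B` would be
covered by countably many null sets), and `x ∉ D` gives a closed ball `closedBall x r` missing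
the closed set `D`. The essential convex hull of `B ∩ B(x, r)` lies in `closedBall x r`: a point
`z` outside it is cut off by the half-space with normal `z - x` supporting the ball.
-/

open MeasureTheory Filter Set
open scoped RealInnerProductSpace Topology

noncomputable section

open Metric

variable {n : ℕ}

lemma cessco_subset_halfSpace {A : Set (EuclideanSpace ℝ (Fin n))}
    {ρ : EuclideanSpace ℝ (Fin n)} {t : ℝ} (h : volume (A \ halfSpace ρ t) = 0) :
    cessco A ⊆ halfSpace ρ t :=
  iInter_subset_of_subset ρ <| iInter_subset_of_subset t <| iInter_subset _ h

lemma closedBall_subset_halfSpace (x ρ : EuclideanSpace ℝ (Fin n)) (r : ℝ) :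
    closedBall x r ⊆ halfSpace ρ (⟪x, ρ⟫ + r * ‖ρ‖) := by
  intro y hy
  have hyx : ⟪y - x, ρ⟫ ≤ r * ‖ρ‖ :=
    calc ⟪y - x, ρ⟫ ≤ ‖y - x‖ * ‖ρ‖ := real_inner_le_norm _ _
      _ ≤ r * ‖ρ‖ := by gcongr; rwa [← dist_eq_norm, ← mem_closedBall]
  rw [inner_sub_left] at hyx
  show ⟪y, ρ⟫ ≤ ⟪x, ρ⟫ + r * ‖ρ‖
  linarith

lemma cessco_subset_closedBall {A : Set (EuclideanSpace ℝ (Fin n))}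
    {x : EuclideanSpace ℝ (Fin n)} {r : ℝ} (hr : 0 ≤ r) (hA : A ⊆ closedBall x r) :
    cessco A ⊆ closedBall x r := by
  intro z hz
  by_contra hzr
  set ρ := z - x
  have hρr : r < ‖ρ‖ := by rwa [← dist_eq_norm, ← not_le, ← mem_closedBall]
  have hnull : volume (A \ halfSpace ρ (⟪x, ρ⟫ + r * ‖ρ‖)) = 0 := by
    rw [sdiff_eq_empty.2 (hA.trans (closedBall_subset_halfSpace x ρ r)), measure_empty]
  have hzH : ⟪z, ρ⟫ ≤ ⟪x, ρ⟫ + r * ‖ρ‖ := cessco_subset_halfSpace hnull hz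
  have hzx : ⟪z, ρ⟫ - ⟪x, ρ⟫ = ‖ρ‖ * ‖ρ‖ := by
    rw [← inner_sub_left, real_inner_self_eq_norm_mul_norm]
  nlinarith

theorem exists_ball_cessco_disjoint_general {n : ℕ} (B : Set (EuclideanSpace ℝ (Fin n)))
    (hm : 0 < volume B)
    (D : Set (EuclideanSpace ℝ (Fin n))) (hD : IsClosed D) (hBD : B ∩ D = ∅) :
    ∃ x ∈ B, ∃ r : ℝ, 0 < r ∧
      0 < volume (B ∩ Metric.ball x r) ∧
      cessco (B ∩ Metric.ball x r) ∩ D = ∅ := by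
  obtain ⟨x, hxB, hx⟩ := exists_mem_forall_mem_nhdsWithin_pos_measure hm.ne'
  have hxD : x ∈ Dᶜ := fun hxD ↦ hBD.subset ⟨hxB, hxD⟩
  obtain ⟨r, hr, hrD⟩ := nhds_basis_closedBall.mem_iff.1 (hD.isOpen_compl.mem_nhds hxD)
  refine ⟨x, hxB, r, hr, hx _ (inter_mem_nhdsWithin B (ball_mem_nhds x hr)), ?_⟩
  have hcessco : cessco (B ∩ ball x r) ⊆ closedBall x r :=
    cessco_subset_closedBall hr.le (inter_subset_right.trans ball_subset_closedBall)
  exact (subset_compl_iff_disjoint_right.1 (hcessco.trans hrD)).inter_eq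

/-- If `B` has positive measure and is disjoint from the closed set `D`, then there is a
point `x ∈ B` and `r > 0` such that `B' = B ∩ B(x,r)` has positive measure and
`cessco B'` is disjoint from `D`. -/
theorem exists_ball_cessco_disjoint {n : ℕ} (B : Set (EuclideanSpace ℝ (Fin n)))
    (hB : MeasurableSet B) (hm : 0 < volume B)
    (D : Set (EuclideanSpace ℝ (Fin n))) (hD : IsClosed D) (hBD : B ∩ D = ∅) :
    ∃ x ∈ B, ∃ r : ℝ, 0 < r ∧
      0 < volume (B ∩ Metric.ball x r) ∧
      cessco (B ∩ Metric.ball x r) ∩ D = ∅ :=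
  exists_ball_cessco_disjoint_general B hm D hD hBD
end
end
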